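/- Let X₀ ~ N(0, Q) with Q > 0, and let X₁ = Σ_{i=1}^n (X₀ + aᵢ)·1_{X₀ ∈ (−B_{i+1}, −Bᵢ]} + (X₀ − aᵢ)·1_{X₀ ∈ [Bᵢ, B_{i+1})}, with 0 = B₁ ≤ … ≤ Bₙ, B_{n+1} = ∞, and 0 ≤ a₁ ≤ … ≤ aₙ. Then E[X₁²] = Q − 4√Q · Σ_{i=1}^n aᵢ (φ(Bᵢ/√Q) − φ(B_{i+1}/√Q)) + 2 Σ_{i=1}^n aᵢ² pᵢ, where pᵢ = Φ(B_{i+1}/√Q) − Φ(Bᵢ/√Q) and φ, Φ are the standard normal PDF and CDF (with φ(∞) = 0, Φ(∞) = 1). -/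

import Mathlib

open Real MeasureTheory ProbabilityTheory Finset
open scoped NNReal

/-- Standard normal PDF. -/
noncomputable def stdPdf (x : ℝ) : ℝ :=
  (Real.sqrt (2 * Real.pi))⁻¹ * Real.exp (-x ^ 2 / 2)

/-- Standard normal CDF. -/
noncomputable def stdCdf (t : ℝ) : ℝ := ∫ s in Set.Iic t, stdPdf s

/-!
Since `X₀ ≠ 0` almost surely and the cells `Pᵢ = [Bᵢ, Bᵢ₊₁)` and `Nᵢ = -Pᵢ` are pairwise disjoint
away from `0`, `X₁² = ∑ᵢ (X₀ + aᵢ)² 1_{Nᵢ}(X₀) + (X₀ - aᵢ)² 1_{Pᵢ}(X₀)` almost surely, and by the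
symmetry of the centred Gaussian density the two halves contribute equally. With `X₀ = √Q Z`,
the identity `φ' = -z φ` gives the tail moments `∫_{z > t} φ = 1 - Φ(t)`, `∫_{z > t} z φ = φ(t)` and
`∫_{z > t} z² φ = t φ(t) + 1 - Φ(t)`; the second-moment terms telescope over the cells to
`2 Q (0 · φ(0) + 1 - Φ(0)) = Q`.
-/

open Set

theorem integral_Ioi_of_hasDerivAt_of_integrable {E : Type*} [NormedAddCommGroup E]
    [NormedSpace ℝ E] [CompleteSpace E] {f f' : ℝ → E} (hderiv : ∀ x, HasDerivAt f (f' x) x)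
    (hf : Integrable f) (hf' : Integrable f') (t : ℝ) : ∫ x in Ioi t, f' x = -f t := by
  have hlim := tendsto_zero_of_hasDerivAt_of_integrableOn_Ioi (a := t) (fun x _ ↦ hderiv x)
    hf'.integrableOn hf.integrableOn
  rw [integral_Ioi_of_hasDerivAt_of_tendsto' (fun x _ ↦ hderiv x) hf'.integrableOn hlim, zero_sub]

theorem sq_sum_indicator_of_pairwiseDisjoint {ι α R : Type*} [Semiring R] {s : Finset ι}
    {S : ι → Set α} (hS : (s : Set ι).PairwiseDisjoint S) (f : ι → α → R) (x : α) :
    (∑ i ∈ s, (S i).indicator (f i) x) ^ 2 = ∑ i ∈ s, (S i).indicator (fun y ↦ f i y ^ 2) x := by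
  by_cases hx : ∃ j ∈ s, x ∈ S j
  · obtain ⟨j, hj, hxj⟩ := hx
    have hnot : ∀ i ∈ s, i ≠ j → x ∉ S i := fun i hi hij hxi ↦
      Set.disjoint_left.1 (hS hi hj hij) hxi hxj
    rw [sum_eq_single_of_mem j hj fun i hi hij ↦ indicator_of_notMem (hnot i hi hij) _,
      sum_eq_single_of_mem j hj fun i hi hij ↦ indicator_of_notMem (hnot i hi hij) _,
      indicator_of_mem hxj, indicator_of_mem hxj]
  · push Not at hx
    rw [sum_eq_zero fun i hi ↦ indicator_of_notMem (hx i hi) _,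
      sum_eq_zero fun i hi ↦ indicator_of_notMem (hx i hi) _, sq, zero_mul]

theorem sum_range_sub_ite_succ {G : Type*} [AddCommGroup G] (f : ℕ → G) {n : ℕ} (hn : n ≠ 0) :
    ∑ i ∈ range n, (f i - if i + 1 = n then 0 else f (i + 1)) = f 0 := by
  let g : ℕ → G := fun j ↦ if j = n then 0 else f j
  have hsum : ∀ i ∈ range n, (f i - if i + 1 = n then 0 else f (i + 1)) = g i - g (i + 1) :=
    fun i hi ↦ by simp [g, (mem_range.1 hi).ne]
  rw [sum_congr rfl hsum, sum_range_sub']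
  simp [g, hn.symm]

theorem setIntegral_neg_set (s : Set ℝ) (f : ℝ → ℝ) :
    ∫ x in -s, f x = ∫ x in s, f (-x) := by
  conv_lhs => rw [← Measure.map_neg_eq_self (volume : Measure ℝ)]
  rw [measurableEmbedding_neg.setIntegral_map, Set.neg_preimage, neg_neg]

theorem stdPdf_neg (x : ℝ) : stdPdf (-x) = stdPdf x := by
  simp [stdPdf]

theorem stdPdf_eq_gaussianPDFReal : stdPdf = gaussianPDFReal 0 1 := by
  ext x
  simp [stdPdf, gaussianPDFReal, neg_div]

theorem hasDerivAt_stdPdf (x : ℝ) : HasDerivAt stdPdf (-x * stdPdf x) x := by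
  refine (((hasDerivAt_pow 2 x).neg.div_const 2).exp.const_mul (√(2 * π))⁻¹).congr_deriv ?_
  simp only [stdPdf, Pi.neg_apply]
  ring_nf

theorem integrable_pow_mul_stdPdf (k : ℕ) : Integrable fun x ↦ x ^ k * stdPdf x := by
  refine ((integrable_rpow_mul_exp_neg_mul_sq (b := 1 / 2) (by norm_num) (s := k)
    (by linarith [k.cast_nonneg (α := ℝ)])).const_mul (√(2 * π))⁻¹).congr (ae_of_all _ fun x ↦ ?_)
  simp only [stdPdf, rpow_natCast]
  ring_nf

theorem integrable_stdPdf : Integrable stdPdf := by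
  simpa using integrable_pow_mul_stdPdf 0

theorem integral_stdPdf : ∫ x, stdPdf x = 1 := by
  rw [stdPdf_eq_gaussianPDFReal]
  exact integral_gaussianPDFReal_eq_one 0 one_ne_zero

theorem integral_Ioi_stdPdf (t : ℝ) : ∫ x in Ioi t, stdPdf x = 1 - stdCdf t := by
  have h := integral_add_compl (measurableSet_Iic (a := t)) integrable_stdPdf
  rw [compl_Iic, integral_stdPdf] at h
  rw [stdCdf]
  linarith

theorem stdCdf_zero : stdCdf 0 = 1 / 2 := by
  have h : stdCdf 0 = 1 - stdCdf 0 := by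
    rw [← integral_Ioi_stdPdf, ← neg_zero, ← integral_comp_neg_Iic, stdCdf, neg_zero]
    simp only [stdPdf_neg]
  linarith

theorem integral_Ioi_mul_stdPdf (t : ℝ) : ∫ x in Ioi t, x * stdPdf x = stdPdf t := by
  have h := integral_Ioi_of_hasDerivAt_of_integrable (f := fun x ↦ -stdPdf x)
    (fun x ↦ (hasDerivAt_stdPdf x).neg) integrable_stdPdf.neg
    (by simpa using (integrable_pow_mul_stdPdf 1).neg) t
  simpa using h

theorem integral_Ioi_sq_mul_stdPdf (t : ℝ) :
    ∫ x in Ioi t, x ^ 2 * stdPdf x = t * stdPdf t + (1 - stdCdf t) := by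
  have hderiv (x : ℝ) : HasDerivAt (fun y ↦ -(y * stdPdf y)) (x ^ 2 * stdPdf x - stdPdf x) x := by
    refine (((hasDerivAt_id' x).mul (hasDerivAt_stdPdf x)).neg).congr_deriv ?_
    ring
  have h := integral_Ioi_of_hasDerivAt_of_integrable hderiv
    (by simpa using (integrable_pow_mul_stdPdf 1).neg)
    ((integrable_pow_mul_stdPdf 2).sub integrable_stdPdf) t
  rw [integral_sub (integrable_pow_mul_stdPdf 2).integrableOn integrable_stdPdf.integrableOn,
    integral_Ioi_stdPdf] at h
  linarith

theorem integrable_sq_sub_mul_stdPdf (σ a : ℝ) : Integrable fun z ↦ (σ * z - a) ^ 2 * stdPdf z := by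
  have h := (((integrable_pow_mul_stdPdf 2).const_mul (σ ^ 2)).sub
    ((integrable_pow_mul_stdPdf 1).const_mul (2 * σ * a))).add (integrable_stdPdf.const_mul (a ^ 2))
  refine h.congr (ae_of_all _ fun z ↦ ?_)
  simp only [Pi.add_apply, Pi.sub_apply]
  ring

theorem integral_Ioi_sq_sub_mul_stdPdf (σ a t : ℝ) :
    ∫ z in Ioi t, (σ * z - a) ^ 2 * stdPdf z =
      σ ^ 2 * (t * stdPdf t + (1 - stdCdf t)) - 2 * σ * a * stdPdf t + a ^ 2 * (1 - stdCdf t) := by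
  have hexpand (z : ℝ) : (σ * z - a) ^ 2 * stdPdf z =
      σ ^ 2 * (z ^ 2 * stdPdf z) - 2 * σ * a * (z ^ 1 * stdPdf z) + a ^ 2 * stdPdf z := by
    ring
  have i2 := ((integrable_pow_mul_stdPdf 2).const_mul (σ ^ 2)).integrableOn (s := Ioi t)
  have i1 := ((integrable_pow_mul_stdPdf 1).const_mul (2 * σ * a)).integrableOn (s := Ioi t)
  have i0 := (integrable_stdPdf.const_mul (a ^ 2)).integrableOn (s := Ioi t)
  simp_rw [hexpand]
  rw [integral_add ?_ i0, integral_sub i2 i1, integral_const_mul, integral_const_mul,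
    integral_const_mul, integral_Ioi_sq_mul_stdPdf]
  · simp only [pow_one, integral_Ioi_mul_stdPdf, integral_Ioi_stdPdf]
  · exact i2.sub i1

theorem gaussianPDFReal_zero_neg (v : ℝ≥0) (x : ℝ) :
    gaussianPDFReal 0 v (-x) = gaussianPDFReal 0 v x := by
  simp [gaussianPDFReal]

theorem gaussianPDFReal_zero_sqrt_mul {v : ℝ≥0} (hv : v ≠ 0) (z : ℝ) :
    gaussianPDFReal 0 v (√v * z) = (√v)⁻¹ * stdPdf z := by
  have hv' : (0 : ℝ) < v := by positivity
  rw [gaussianPDFReal, stdPdf, sub_zero, mul_pow, sq_sqrt hv'.le, sqrt_mul (by positivity), mul_inv]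
  have hexp : -(v * z ^ 2) / (2 * v) = -z ^ 2 / 2 := by field_simp
  rw [hexp]
  ring

theorem integrable_sq_sub_mul_gaussianPDFReal {v : ℝ≥0} (hv : v ≠ 0) (a : ℝ) :
    Integrable fun x ↦ (x - a) ^ 2 * gaussianPDFReal 0 v x := by
  have hσ : √(v : ℝ) ≠ 0 := by positivity
  refine (((integrable_sq_sub_mul_stdPdf √v a).comp_div hσ).const_mul (√v)⁻¹).congr
    (ae_of_all _ fun x ↦ ?_)
  have hx : x = √v * (x / √v) := (mul_div_cancel₀ x hσ).symm
  dsimp only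
  conv_rhs => rw [hx, gaussianPDFReal_zero_sqrt_mul hv]
  ring

theorem integral_Ici_sq_sub_mul_gaussianPDFReal {v : ℝ≥0} (hv : v ≠ 0) (a b : ℝ) :
    ∫ x in Ici b, (x - a) ^ 2 * gaussianPDFReal 0 v x =
      v * (b / √v * stdPdf (b / √v) + (1 - stdCdf (b / √v))) - 2 * √v * a * stdPdf (b / √v) +
        a ^ 2 * (1 - stdCdf (b / √v)) := by
  have hσ : 0 < √(v : ℝ) := by positivity
  have hscale : ∫ x in Ioi b, (x - a) ^ 2 * gaussianPDFReal 0 v x =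
      √v * ∫ z in Ioi (b / √v), (√v * z - a) ^ 2 * gaussianPDFReal 0 v (√v * z) := by
    rw [integral_comp_mul_left_Ioi (fun x ↦ (x - a) ^ 2 * gaussianPDFReal 0 v x) _ hσ,
      mul_div_cancel₀ _ hσ.ne', smul_eq_mul, mul_inv_cancel_left₀ hσ.ne']
  simp_rw [integral_Ici_eq_integral_Ioi, hscale, gaussianPDFReal_zero_sqrt_mul hv,
    mul_left_comm _ (√(v : ℝ))⁻¹]
  rw [integral_const_mul, mul_inv_cancel_left₀ hσ.ne', integral_Ioi_sq_sub_mul_stdPdf,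
    sq_sqrt v.coe_nonneg]

theorem integral_comp_eq_integral_gaussianPDFReal_mul {Ω : Type*} [MeasurableSpace Ω]
    {μ : Measure Ω} {X : Ω → ℝ} (hX : Measurable X) {m : ℝ} {v : ℝ≥0} (hv : v ≠ 0)
    (hlaw : μ.map X = gaussianReal m v) {g : ℝ → ℝ} (hg : Measurable g) :
    ∫ ω, g (X ω) ∂μ = ∫ x, gaussianPDFReal m v x * g x := by
  rw [← integral_map hX.aemeasurable hg.aestronglyMeasurable, hlaw,
    integral_gaussianReal_eq_integral_smul hv]
  rfl

section Cells

variable (B : ℕ → ℝ) (n : ℕ)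

/- The paper's cells `i = 1, …, n` with `B_{n+1} = ∞` are here `i = 0, …, n - 1`, the last one
unbounded. -/
def posCell (i : ℕ) : Set ℝ := if i + 1 = n then Ici (B i) else Ico (B i) (B (i + 1))

def negCell (i : ℕ) : Set ℝ := if i + 1 = n then Iic (-B i) else Ioc (-B (i + 1)) (-B i)

theorem negCell_eq_neg_posCell (i : ℕ) : negCell B n i = -posCell B n i := by
  unfold negCell posCell
  split_ifs <;> simp

theorem measurableSet_posCell (i : ℕ) : MeasurableSet (posCell B n i) := by
  unfold posCell
  split_ifs
  exacts [measurableSet_Ici, measurableSet_Ico]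

theorem measurableSet_negCell (i : ℕ) : MeasurableSet (negCell B n i) := by
  rw [negCell_eq_neg_posCell]
  exact (measurableSet_posCell B n i).neg

theorem posCell_subset_Ici (i : ℕ) : posCell B n i ⊆ Ici (B i) := by
  unfold posCell
  split_ifs
  exacts [subset_rfl, Ico_subset_Ici_self]

variable {B n}

theorem disjoint_posCell_of_lt (hB : MonotoneOn B (Set.Iio n)) {i j : ℕ} (hij : i < j)
    (hj : j < n) : Disjoint (posCell B n i) (posCell B n j) := by
  have hi : posCell B n i ⊆ Iio (B (i + 1)) := by
    simp only [posCell, if_neg (by omega : i + 1 ≠ n)]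
    exact Ico_subset_Iio_self
  have hBij : B (i + 1) ≤ B j := hB (by simp; omega) (by simpa using hj) hij
  exact (Iio_disjoint_Ici hBij).mono hi (posCell_subset_Ici B n j)

theorem pairwiseDisjoint_posCell (hB : MonotoneOn B (Set.Iio n)) :
    ((range n : Finset ℕ) : Set ℕ).PairwiseDisjoint (posCell B n) := by
  intro i hi j hj hij
  simp only [coe_range, Set.mem_Iio] at hi hj
  rcases hij.lt_or_gt with h | h
  exacts [disjoint_posCell_of_lt hB h hj, (disjoint_posCell_of_lt hB h hi).symm]

theorem pairwiseDisjoint_negCell (hB : MonotoneOn B (Set.Iio n)) :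
    ((range n : Finset ℕ) : Set ℕ).PairwiseDisjoint (negCell B n) := by
  intro i hi j hj hij
  change Disjoint (negCell B n i) (negCell B n j)
  rw [negCell_eq_neg_posCell, negCell_eq_neg_posCell]
  exact (pairwiseDisjoint_posCell hB hi hj hij).preimage _

theorem setIntegral_posCell {f : ℝ → ℝ} (hf : Integrable f) (hB : MonotoneOn B (Set.Iio n)) {i : ℕ}
    (hi : i < n) :
    ∫ x in posCell B n i, f x =
      (∫ x in Ici (B i), f x) - if i + 1 = n then 0 else ∫ x in Ici (B (i + 1)), f x := by
  unfold posCell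
  split_ifs with h
  · rw [sub_zero]
  · have hBi : B i ≤ B (i + 1) := hB (by simpa using hi) (by simp; omega) (Nat.le_succ i)
    rw [← Ici_sdiff_Ici, setIntegral_sdiff measurableSet_Ici hf.integrableOn (Ici_subset_Ici.2 hBi)]

end Cells

section LoPE

variable {B : ℕ → ℝ} {n : ℕ}

theorem posCell_subset_Ici_zero (hB : MonotoneOn B (Set.Iio n)) (hB0 : B 0 = 0) {i : ℕ}
    (hi : i < n) : posCell B n i ⊆ Ici 0 :=
  (posCell_subset_Ici B n i).trans <| Ici_subset_Ici.2 <|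
    hB0 ▸ hB (Set.mem_Iio.2 (by omega)) (Set.mem_Iio.2 hi) (Nat.zero_le i)

theorem negCell_subset_Iic_zero (hB : MonotoneOn B (Set.Iio n)) (hB0 : B 0 = 0) {i : ℕ}
    (hi : i < n) : negCell B n i ⊆ Iic 0 := by
  intro x hx
  rw [negCell_eq_neg_posCell, Set.mem_neg] at hx
  simpa using posCell_subset_Ici_zero hB hB0 hi hx

variable (B n) in
noncomputable def lopeStep (a : ℕ → ℝ) (x : ℝ) : ℝ :=
  ∑ i ∈ range n, ((negCell B n i).indicator (fun y ↦ y + a i) x +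
    (posCell B n i).indicator (fun y ↦ y - a i) x)

variable (B n) in
theorem lopeStep_eq_sum_mul_indicator (a : ℕ → ℝ) (x : ℝ) :
    lopeStep B n a x = ∑ i ∈ Finset.range n,
        ((x + a i) *
          (if i + 1 = n then Set.indicator (Set.Iic (-(B i))) (fun _ => (1 : ℝ)) x
           else Set.indicator (Set.Ioc (-(B (i + 1))) (-(B i))) (fun _ => (1 : ℝ)) x) +
         (x - a i) *
          (if i + 1 = n then Set.indicator (Set.Ici (B i)) (fun _ => (1 : ℝ)) x
           else Set.indicator (Set.Ico (B i) (B (i + 1))) (fun _ => (1 : ℝ)) x)) := by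
  refine sum_congr rfl fun i _ ↦ ?_
  unfold negCell posCell
  split_ifs <;> simp [indicator_apply]

variable (B n) in
theorem measurable_lopeStep (a : ℕ → ℝ) : Measurable (lopeStep B n a) :=
  Finset.measurable_sum _ fun i _ ↦
    ((measurable_id.add_const _).indicator (measurableSet_negCell B n i)).add
      ((measurable_id.sub_const _).indicator (measurableSet_posCell B n i))

theorem lopeStep_sq (hB : MonotoneOn B (Set.Iio n)) (hB0 : B 0 = 0) (a : ℕ → ℝ) {x : ℝ}
    (hx : x ≠ 0) :
    lopeStep B n a x ^ 2 = ∑ i ∈ range n, ((negCell B n i).indicator (fun y ↦ (y + a i) ^ 2) x +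
      (posCell B n i).indicator (fun y ↦ (y - a i) ^ 2) x) := by
  have hcross : (∑ i ∈ range n, (negCell B n i).indicator (fun y ↦ y + a i) x) *
      (∑ i ∈ range n, (posCell B n i).indicator (fun y ↦ y - a i) x) = 0 := by
    rcases hx.lt_or_gt with hx | hx
    · refine mul_eq_zero_of_right _ (sum_eq_zero fun i hi ↦ indicator_of_notMem (fun hxi ↦ ?_) _)
      exact hx.not_ge (posCell_subset_Ici_zero hB hB0 (mem_range.1 hi) hxi)
    · refine mul_eq_zero_of_left (sum_eq_zero fun i hi ↦ indicator_of_notMem (fun hxi ↦ ?_) _) _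
      exact hx.not_ge (negCell_subset_Iic_zero hB hB0 (mem_range.1 hi) hxi)
  rw [lopeStep, sum_add_distrib, add_sq, mul_assoc, hcross,
    sq_sum_indicator_of_pairwiseDisjoint (pairwiseDisjoint_negCell hB),
    sq_sum_indicator_of_pairwiseDisjoint (pairwiseDisjoint_posCell hB), sum_add_distrib]
  ring

theorem integral_gaussianPDFReal_mul_lopeStep_sq {v : ℝ≥0} (hv : v ≠ 0)
    (hB : MonotoneOn B (Set.Iio n)) (hB0 : B 0 = 0) (a : ℕ → ℝ) :
    ∫ x, gaussianPDFReal 0 v x * lopeStep B n a x ^ 2 =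
      ∑ i ∈ range n, 2 * ∫ x in posCell B n i, (x - a i) ^ 2 * gaussianPDFReal 0 v x := by
  set p := gaussianPDFReal 0 v
  have hae : (fun x ↦ p x * lopeStep B n a x ^ 2) =ᵐ[volume] fun x ↦ ∑ i ∈ range n,
      ((negCell B n i).indicator (fun y ↦ (y + a i) ^ 2 * p y) x +
        (posCell B n i).indicator (fun y ↦ (y - a i) ^ 2 * p y) x) := by
    filter_upwards [(countable_singleton (0 : ℝ)).ae_notMem volume] with x hx
    rw [lopeStep_sq hB hB0 a hx, mul_sum]
    refine sum_congr rfl fun i _ ↦ ?_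
    simp only [indicator_mul_left]
    ring
  have hsub (c : ℝ) : Integrable fun x ↦ (x - c) ^ 2 * p x :=
    integrable_sq_sub_mul_gaussianPDFReal hv c
  have hadd (c : ℝ) : Integrable fun x ↦ (x + c) ^ 2 * p x := by
    simpa using hsub (-c)
  have hN (i : ℕ) := (hadd (a i)).indicator (measurableSet_negCell B n i)
  have hP (i : ℕ) := (hsub (a i)).indicator (measurableSet_posCell B n i)
  refine (integral_congr_ae hae).trans <| (integral_finsetSum _ fun i _ ↦ (hN i).add (hP i)).trans
    (sum_congr rfl fun i _ ↦ ?_)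
  rw [integral_add' (hN i) (hP i), integral_indicator (measurableSet_negCell B n i),
    integral_indicator (measurableSet_posCell B n i), negCell_eq_neg_posCell, setIntegral_neg_set]
  have hsymm (x : ℝ) : (-x + a i) ^ 2 * p (-x) = (x - a i) ^ 2 * p x := by
    simp only [p, gaussianPDFReal_zero_neg]
    ring
  simp only [hsymm]
  ring

theorem setIntegral_posCell_sq_sub_mul_gaussianPDFReal {v : ℝ≥0} (hv : v ≠ 0)
    (hB : MonotoneOn B (Set.Iio n)) {i : ℕ} (hi : i < n) (c : ℝ) :
    ∫ x in posCell B n i, (x - c) ^ 2 * gaussianPDFReal 0 v x =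
      v * ((B i / √v * stdPdf (B i / √v) + (1 - stdCdf (B i / √v))) -
        if i + 1 = n then 0
        else B (i + 1) / √v * stdPdf (B (i + 1) / √v) + (1 - stdCdf (B (i + 1) / √v))) -
      2 * √v * (c * (stdPdf (B i / √v) - if i + 1 = n then 0 else stdPdf (B (i + 1) / √v))) +
      c ^ 2 * (if i + 1 = n then 1 - stdCdf (B i / √v)
        else stdCdf (B (i + 1) / √v) - stdCdf (B i / √v)) := by
  rw [setIntegral_posCell (integrable_sq_sub_mul_gaussianPDFReal hv c) hB hi]
  split_ifs <;> simp only [integral_Ici_sq_sub_mul_gaussianPDFReal hv] <;> ring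

end LoPE

theorem stmt_12_general {Ω : Type*} [MeasurableSpace Ω] (μ : Measure Ω)
    (X₀ : Ω → ℝ) (hX₀ : Measurable X₀) (Q : ℝ≥0) (hQ : 0 < Q)
    (hlaw : μ.map X₀ = gaussianReal 0 Q)
    (n : ℕ) (hn : 1 ≤ n) (a B : ℕ → ℝ)
    (hB0 : B 0 = 0) (hBmono : ∀ i, i + 1 < n → B i ≤ B (i + 1)) :
    ∫ ω, (∑ i ∈ Finset.range n,
        ((X₀ ω + a i) *
          (if i + 1 = n then Set.indicator (Set.Iic (-(B i))) (fun _ => (1 : ℝ)) (X₀ ω)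
           else Set.indicator (Set.Ioc (-(B (i + 1))) (-(B i))) (fun _ => (1 : ℝ)) (X₀ ω)) +
         (X₀ ω - a i) *
          (if i + 1 = n then Set.indicator (Set.Ici (B i)) (fun _ => (1 : ℝ)) (X₀ ω)
           else Set.indicator (Set.Ico (B i) (B (i + 1))) (fun _ => (1 : ℝ)) (X₀ ω)))) ^ 2 ∂μ =
      (Q : ℝ) -
        4 * Real.sqrt Q * ∑ i ∈ Finset.range n, a i *
          (stdPdf (B i / Real.sqrt Q) -
            (if i + 1 = n then 0 else stdPdf (B (i + 1) / Real.sqrt Q))) +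
        2 * ∑ i ∈ Finset.range n, (a i) ^ 2 *
          (if i + 1 = n then 1 - stdCdf (B i / Real.sqrt Q)
           else stdCdf (B (i + 1) / Real.sqrt Q) - stdCdf (B i / Real.sqrt Q)) := by
  have hQ0 : Q ≠ 0 := hQ.ne'
  have hB : MonotoneOn B (Set.Iio n) :=
    monotoneOn_of_le_add_one ordConnected_Iio fun i _ _ hi ↦ hBmono i hi
  have htelescope := sum_range_sub_ite_succ
    (fun j ↦ B j / √Q * stdPdf (B j / √Q) + (1 - stdCdf (B j / √Q))) (by omega : n ≠ 0)
  simp only [hB0, zero_div, zero_mul, stdCdf_zero, zero_add] at htelescope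
  simp only [← lopeStep_eq_sum_mul_indicator]
  rw [integral_comp_eq_integral_gaussianPDFReal_mul hX₀ hQ0 hlaw
      ((measurable_lopeStep B n a).pow_const 2),
    integral_gaussianPDFReal_mul_lopeStep_sq hQ0 hB hB0,
    sum_congr rfl fun i hi ↦ congrArg (2 * ·)
      (setIntegral_posCell_sq_sub_mul_gaussianPDFReal hQ0 hB (mem_range.1 hi) (a i))]
  simp only [mul_add, mul_sub, sum_add_distrib, sum_sub_distrib, ← mul_sum, mul_assoc]
    at htelescope ⊢
  linear_combination (2 * (Q : ℝ)) * htelescope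

theorem stmt_12 {Ω : Type*} [MeasurableSpace Ω] (μ : Measure Ω) [IsProbabilityMeasure μ]
    (X₀ : Ω → ℝ) (hX₀ : Measurable X₀) (Q : ℝ≥0) (hQ : 0 < Q)
    (hlaw : μ.map X₀ = gaussianReal 0 Q)
    (n : ℕ) (hn : 1 ≤ n) (a B : ℕ → ℝ)
    (hB0 : B 0 = 0) (hBmono : ∀ i, i + 1 < n → B i ≤ B (i + 1))
    (ha0 : 0 ≤ a 0) (hamono : ∀ i, i + 1 < n → a i ≤ a (i + 1)) :
    ∫ ω, (∑ i ∈ Finset.range n,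
        ((X₀ ω + a i) *
          (if i + 1 = n then Set.indicator (Set.Iic (-(B i))) (fun _ => (1 : ℝ)) (X₀ ω)
           else Set.indicator (Set.Ioc (-(B (i + 1))) (-(B i))) (fun _ => (1 : ℝ)) (X₀ ω)) +
         (X₀ ω - a i) *
          (if i + 1 = n then Set.indicator (Set.Ici (B i)) (fun _ => (1 : ℝ)) (X₀ ω)
           else Set.indicator (Set.Ico (B i) (B (i + 1))) (fun _ => (1 : ℝ)) (X₀ ω)))) ^ 2 ∂μ =
      (Q : ℝ) -
        4 * Real.sqrt Q * ∑ i ∈ Finset.range n, a i *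
          (stdPdf (B i / Real.sqrt Q) -
            (if i + 1 = n then 0 else stdPdf (B (i + 1) / Real.sqrt Q))) +
        2 * ∑ i ∈ Finset.range n, (a i) ^ 2 *
          (if i + 1 = n then 1 - stdCdf (B i / Real.sqrt Q)
           else stdCdf (B (i + 1) / Real.sqrt Q) - stdCdf (B i / Real.sqrt Q)) :=
  stmt_12_general μ X₀ hX₀ Q hQ hlaw n hn a B hB0 hBmono
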